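/- arXiv:0709.3999 — 3 statements merged into one kernel-verified Lean document; each statement's English description precedes it below -/
import Mathlib

section
/- Let X be a scheme and A, B closed subschemes with a map A ⊔ B → X such that A → X and B → X are closed embeddings and the map is scheme-theoretically surjective (X = A ∪ B). Let C = A ∩ B (scheme-theoretic intersection). Then X, together with the inclusions of A and B, is determined up to unique isomorphism by the data of C as a closed subscheme of A and of B. -/
/-!
Since `I_A ∩ I_B = 0`, the map `R → R/I_A × R/I_B` is injective. A pair `(x, y)` agreeing in
`R/(I_A + I_B)` lies in its image: lift to `r, s` with `r - s = i + j` (`i ∈ I_A`, `j ∈ I_B`);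
then `r - i = s + j` is a common lift. So a compatible pair `T → R/I_A`, `T → R/I_B` lands in
the image of `R`, and factors uniquely through `R`.
-/

namespace RingHom

theorem prod_comp_eq_prod_iff {R S T U : Type*} [NonAssocSemiring R] [NonAssocSemiring S]
    [NonAssocSemiring T] [NonAssocSemiring U] (f : S →+* T) (g : S →+* U) (φ : R →+* S)
    (f' : R →+* T) (g' : R →+* U) :
    (f.prod g).comp φ = f'.prod g' ↔ f.comp φ = f' ∧ g.comp φ = g' := by
  simp only [RingHom.ext_iff, comp_apply, prod_apply, Prod.ext_iff, forall_and]

theorem existsUnique_comp_eq_of_injective {R S T : Type*} [NonAssocRing R] [NonAssocRing S]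
    [NonAssocSemiring T] {f : R →+* S} (hf : Function.Injective f) (g : T →+* S)
    (hg : ∀ t, g t ∈ f.range) : ∃! φ : T →+* R, f.comp φ = g := by
  let e : R ≃+* f.range := RingEquiv.ofBijective f.rangeRestrict
    ⟨fun x y hxy => hf (congrArg Subtype.val hxy), f.rangeRestrict_surjective⟩
  have hcomp : f.comp (e.symm.toRingHom.comp (g.codRestrict f.range hg)) = g := by
    ext t
    exact congrArg Subtype.val (e.apply_symm_apply _)
  refine ⟨_, hcomp, fun φ hφ => ?_⟩
  ext t
  exact hf (RingHom.congr_fun (hφ.trans hcomp.symm) t)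

end RingHom

namespace Ideal.Quotient

variable {R : Type*} [CommRing R] {I J : Ideal R}

theorem injective_prod_mk_of_inf_eq_bot (h : I ⊓ J = ⊥) :
    Function.Injective ((mk I).prod (mk J)) := by
  rw [injective_iff_map_eq_zero]
  intro r hr
  simp only [RingHom.prod_apply, Prod.mk_eq_zero, eq_zero_iff_mem] at hr
  have hr' : r ∈ I ⊓ J := hr
  rwa [h, mem_bot] at hr'

theorem mem_range_prod_mk_of_factor_eq {x : R ⧸ I} {y : R ⧸ J}
    (hxy : factor (le_sup_left : I ≤ I + J) x = factor (le_sup_right : J ≤ I + J) y) :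
    (x, y) ∈ ((mk I).prod (mk J)).range := by
  obtain ⟨r, rfl⟩ := mk_surjective x
  obtain ⟨s, rfl⟩ := mk_surjective y
  rw [factor_mk, factor_mk, mk_eq_mk_iff_sub_mem] at hxy
  obtain ⟨i, hi, j, hj, hij⟩ := Submodule.mem_sup.mp hxy
  refine ⟨r - i, Prod.ext ?_ ?_⟩
  · simp [eq_zero_iff_mem.mpr hi]
  · rw [RingHom.prod_apply, show r - i = s + j by linear_combination -hij]
    simp [eq_zero_iff_mem.mpr hj]

end Ideal.Quotient

/-- (Affine form, as in the paper's proof.) Let `X = Spec R` be a scheme that is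
the scheme-theoretic union of two closed subschemes `A = Spec (R/I_A)` and `B = Spec (R/I_B)`
(i.e. `I_A ∩ I_B = 0`), and let `C = A ∩ B = Spec (R/(I_A+I_B))`. Then `X`, together with the
inclusions of `A` and `B`, is determined up to unique isomorphism by the data `C ⊆ A, B`:
namely, `R` is the inverse limit (fiber product) of `R/I_A → R/(I_A+I_B) ← R/I_B`, which is
expressed by the universal property below. -/
theorem stmt1 (R : Type*) [CommRing R] (IA IB : Ideal R) (h : IA ⊓ IB = ⊥) :
    ∀ (T : Type*) [CommRing T] (a : T →+* R ⧸ IA) (b : T →+* R ⧸ IB),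
      (Ideal.Quotient.factor (show IA ≤ IA + IB from le_sup_left)).comp a =
        (Ideal.Quotient.factor (show IB ≤ IA + IB from le_sup_right)).comp b →
      ∃! φ : T →+* R,
        (Ideal.Quotient.mk IA).comp φ = a ∧ (Ideal.Quotient.mk IB).comp φ = b := by
  intro T _ a b hab
  simp only [← RingHom.prod_comp_eq_prod_iff]
  exact RingHom.existsUnique_comp_eq_of_injective
    (Ideal.Quotient.injective_prod_mk_of_inf_eq_bot h) (a.prod b)
    fun t => Ideal.Quotient.mem_range_prod_mk_of_factor_eq (RingHom.congr_fun hab t)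
end

section
/- Suppose A ⊔ B → X' → X are maps of schemes where both composites A,B → X' and A,B → X are closed embeddings with scheme-theoretic union equal to X' and X respectively. Let C' = A ∩_{X'} B and C = A ∩_X B be the scheme-theoretic intersections. Then C' is a closed subscheme of C, and the map X' → X is an isomorphism if and only if the inclusion C' ↪ C is an isomorphism. -/
/-!
Since `I_A ∩ I_B = 0`, an element of `R` is determined by its images in `R/I_A` and `R/I_B`,
so `φ` is injective. For surjectivity, lift `r' ∈ R'` modulo `I_A'` and `I_B'` to `a, b ∈ R`.
Then `φ (a - b) ∈ I_A' + I_B'`, so `a - b ∈ I_A + I_B` exactly when `C' ↪ C` is an isomorphism;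
writing `a - b = x + y`, the element `a - x = b + y` maps to `r'` modulo `I_A' ∩ I_B' = 0`.
-/

namespace Ideal

variable {R S : Type*} [CommRing R] [CommRing S] {f : R →+* S} {I J : Ideal R} {K L : Ideal S}

theorem quotientMap_injective_iff {H : I ≤ K.comap f} :
    Function.Injective (quotientMap K f H) ↔ K.comap f ≤ I := by
  refine ⟨fun hinj r hr => ?_, quotientMap_injective'⟩
  rw [← Quotient.eq_zero_iff_mem]
  apply hinj
  rwa [quotientMap_mk, map_zero, Quotient.eq_zero_iff_mem]

theorem quotientMap_surjective_iff {H : I ≤ K.comap f} :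
    Function.Surjective (quotientMap K f H) ↔ ∀ s, ∃ r, f r - s ∈ K := by
  rw [← Quotient.mk_surjective.of_comp_iff, ← RingHom.coe_comp, quotientMap_comp_mk,
    Function.Surjective, Quotient.mk_surjective.forall]
  simp only [RingHom.coe_comp, Function.comp_apply, Quotient.mk_eq_mk_iff_sub_mem]

theorem injective_of_quotientMap_injective {hI : I ≤ K.comap f} {hJ : J ≤ L.comap f}
    (hIK : Function.Injective (quotientMap K f hI))
    (hJL : Function.Injective (quotientMap L f hJ)) (hIJ : I ⊓ J = ⊥) :
    Function.Injective f := by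
  rw [RingHom.injective_iff_ker_eq_bot, eq_bot_iff, ← hIJ, RingHom.ker_eq_comap_bot]
  exact le_inf ((comap_mono bot_le).trans (quotientMap_injective_iff.1 hIK))
    ((comap_mono bot_le).trans (quotientMap_injective_iff.1 hJL))

theorem surjective_of_comap_sup_le_of_inf_eq_bot (hI : I ≤ K.comap f) (hJ : J ≤ L.comap f)
    (hK : ∀ s, ∃ r, f r - s ∈ K) (hL : ∀ s, ∃ r, f r - s ∈ L)
    (hKL : (K ⊔ L).comap f ≤ I ⊔ J) (hbot : K ⊓ L = ⊥) :
    Function.Surjective f := by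
  intro s
  obtain ⟨a, ha⟩ := hK s
  obtain ⟨b, hb⟩ := hL s
  have hab : a - b ∈ I ⊔ J := hKL <| by
    rw [mem_comap, map_sub, show f a - f b = (f a - s) - (f b - s) by ring]
    exact sub_mem (mem_sup_left ha) (mem_sup_right hb)
  obtain ⟨x, hx, y, hy, hxy⟩ := Submodule.mem_sup.mp hab
  refine ⟨a - x, sub_eq_zero.mp ?_⟩
  rw [← mem_bot, ← hbot]
  constructor
  · rw [map_sub, show f a - f x - s = (f a - s) - f x by ring]
    exact sub_mem ha (hI hx)
  · rw [show a - x = b + y by linear_combination -hxy, map_add,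
      show f b + f y - s = (f b - s) + f y by ring]
    exact add_mem hb (hJ hy)

end Ideal

/-- (Affine form: `X = Spec R`, `X' = Spec R'`, with `X' → X` corresponding to
`φ : R →+* R'`.) Suppose `A ⊔ B → X' → X` where `A, B` are closed subschemes of both `X'` and
`X` (cut out by ideals `IA', IB' ⊆ R'` and `IA, IB ⊆ R`, with `φ` inducing isomorphisms
`R/I_A ≅ R'/I_A'`, `R/I_B ≅ R'/I_B'`), and the scheme-theoretic unions are all of `X'` and `X`
(`IA' ⊓ IB' = 0`, `IA ⊓ IB = 0`).  Let `C' = A ∩_{X'} B` and `C = A ∩_X B`, cut out by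
`IA' + IB'` and `IA + IB`.  Then `C'` is a closed subscheme of `C` (the induced map
`R/(IA+IB) → R'/(IA'+IB')` is surjective), and `X' → X` is an isomorphism iff the inclusion
`C' ↪ C` is an isomorphism (iff that induced map is also injective, hence bijective). -/
theorem stmt2 (R R' : Type*) [CommRing R] [CommRing R'] (φ : R →+* R')
    (IA IB : Ideal R) (IA' IB' : Ideal R')
    (hA : Ideal.map φ IA = IA') (hB : Ideal.map φ IB = IB')
    (hAiso : Function.Bijective
      (Ideal.quotientMap IA' φ (hA ▸ Ideal.le_comap_map)))
    (hBiso : Function.Bijective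
      (Ideal.quotientMap IB' φ (hB ▸ Ideal.le_comap_map)))
    (hX : IA ⊓ IB = ⊥) (hX' : IA' ⊓ IB' = ⊥) :
    Function.Surjective
      (Ideal.quotientMap (IA' + IB') φ
        (sup_le ((hA ▸ Ideal.le_comap_map).trans (Ideal.comap_mono le_sup_left))
          ((hB ▸ Ideal.le_comap_map).trans (Ideal.comap_mono le_sup_right)))) ∧
    (Function.Bijective φ ↔
      Function.Bijective
        (Ideal.quotientMap (IA' + IB') φ
          (sup_le ((hA ▸ Ideal.le_comap_map).trans (Ideal.comap_mono le_sup_left))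
            ((hB ▸ Ideal.le_comap_map).trans (Ideal.comap_mono le_sup_right))))) := by
  subst hA hB
  have hAsurj := Ideal.quotientMap_surjective_iff.1 hAiso.2
  have hBsurj := Ideal.quotientMap_surjective_iff.1 hBiso.2
  have hCsurj : ∀ {H : IA ⊔ IB ≤ (IA.map φ + IB.map φ).comap φ},
      Function.Surjective (Ideal.quotientMap (IA.map φ + IB.map φ) φ H) :=
    Ideal.quotientMap_surjective_iff.2 fun s => (hAsurj s).imp fun _ h => Ideal.mem_sup_left h
  refine ⟨hCsurj, fun hφ => ⟨?_, hCsurj⟩, fun hC => ⟨?_, ?_⟩⟩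
  · refine Ideal.quotientMap_injective' ?_
    rw [Ideal.add_eq_sup, ← Ideal.map_sup, Ideal.comap_map_of_bijective φ hφ]
  · exact Ideal.injective_of_quotientMap_injective hAiso.1 hBiso.1 hX
  · exact Ideal.surjective_of_comap_sup_le_of_inf_eq_bot Ideal.le_comap_map Ideal.le_comap_map hAsurj hBsurj
      (Ideal.quotientMap_injective_iff.1 hC.1) hX'
end

section
/- Let Q be a word in the simple reflections of a Coxeter group W and w ∈ W. Define the subword complex Δ(Q,w) to have as faces those subsets of (positions of) Q whose complement contains a reduced word for w as a subword. Then Δ(Q,w) is pure: all facets have the same cardinality, namely |Q| − ℓ(w), and the facets are exactly the complements of subwords of Q that are reduced words for w. -/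
/-!
Any reduced subword `ω` of the complement of a face `S` is itself the complement of a face
`S' ⊇ S`, so the complement of a facet is a reduced word for `w`. Conversely, all reduced words
for `w` have length `ℓ(w)`, so when the complement of `S` is reduced, every larger face has a
complement at least as long, hence equals `S`. The cardinality `|Q| - ℓ(w)` of a facet is then
read off from the length of its complement.
-/

open List

namespace List

theorem filter_finRange_mem_of_sublist {n : ℕ} {J : List (Fin n)} (hJ : J <+ finRange n) :
    (finRange n).filter (· ∈ J) = J :=
  ((pairwise_lt_finRange n).filter _).eq_of_mem_iff ((pairwise_lt_finRange n).sublist hJ)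
    (by simp)

theorem length_filter_finRange_notMem {n : ℕ} (S : Finset (Fin n)) :
    ((finRange n).filter (· ∉ S)).length = n - S.card := by
  have hts : ((finRange n).filter (· ∉ S)).toFinset = Sᶜ := by ext; simp
  rw [← toFinset_card_of_nodup ((nodup_finRange n).filter _), hts, Finset.card_compl,
    Fintype.card_fin]

end List

section ComplementWord

variable {α : Type*} (Q : List α)

def complWord (S : Finset (Fin Q.length)) : List α :=
  ((finRange Q.length).filter (· ∉ S)).map Q.get

variable {Q}

theorem length_complWord (S : Finset (Fin Q.length)) :
    (complWord Q S).length = Q.length - S.card := by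
  rw [complWord, length_map, length_filter_finRange_notMem]

theorem exists_superset_complWord_eq {S : Finset (Fin Q.length)} {ω : List α}
    (hω : ω <+ complWord Q S) : ∃ S', S ⊆ S' ∧ complWord Q S' = ω := by
  obtain ⟨J, hJ, rfl⟩ := sublist_map_iff.mp hω
  refine ⟨J.toFinsetᶜ, fun i hiS => Finset.mem_compl.mpr fun hiJ => ?_, ?_⟩
  · simpa [hiS] using hJ.subset (mem_toFinset.mp hiJ)
  · simp only [complWord, Finset.mem_compl, mem_toFinset, not_not]
    rw [filter_finRange_mem_of_sublist (hJ.trans filter_sublist)]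

theorem eq_of_subset_of_length_complWord_le {S S' : Finset (Fin Q.length)} (h : S ⊆ S')
    (hl : (complWord Q S).length ≤ (complWord Q S').length) : S' = S := by
  have hS := S.card_le_univ
  have hS' := S'.card_le_univ
  rw [length_complWord, length_complWord] at hl
  rw [Fintype.card_fin] at hS hS'
  exact (Finset.eq_of_subset_of_card_le h (by omega)).symm

end ComplementWord

section SubwordComplex

variable {B W : Type*} [Group W] {M : CoxeterMatrix B} (cs : CoxeterSystem M W)
  (Q : List B) (w : W)

/-- `S` is a face of the subword complex `Δ(Q, w)`. -/
def IsSubwordFace (S : Finset (Fin Q.length)) : Prop :=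
  ∃ ω : List B, ω <+ complWord Q S ∧ cs.IsReduced ω ∧ cs.wordProd ω = w

variable {cs Q w}

theorem maximal_isSubwordFace_iff {S : Finset (Fin Q.length)} :
    Maximal (IsSubwordFace cs Q w) S ↔
      cs.IsReduced (complWord Q S) ∧ cs.wordProd (complWord Q S) = w := by
  constructor
  · rintro ⟨⟨ω, hω, hred, rfl⟩, hmax⟩
    obtain ⟨S', hSS', rfl⟩ := exists_superset_complWord_eq hω
    have hS'S : S' ⊆ S := hmax ⟨_, .refl _, hred, rfl⟩ hSS'
    rw [← Finset.Subset.antisymm hS'S hSS']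
    exact ⟨hred, rfl⟩
  · rintro ⟨hred, rfl⟩
    refine ⟨⟨_, .refl _, hred, rfl⟩, fun S' ⟨ω', hω', hred', hprod'⟩ hSS' => ?_⟩
    have hl : (complWord Q S).length ≤ (complWord Q S').length := by
      rw [← hred.eq, ← hprod', hred'.eq]
      exact hω'.length_le
    exact (eq_of_subset_of_length_complWord_le hSS' hl).le

theorem card_of_maximal_isSubwordFace {S : Finset (Fin Q.length)}
    (hS : Maximal (IsSubwordFace cs Q w) S) : S.card = Q.length - cs.length w := by
  obtain ⟨hred, hprod⟩ := maximal_isSubwordFace_iff.mp hS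
  have hlen := length_complWord S
  have hcard := S.card_le_univ
  rw [← hred.eq, hprod] at hlen
  rw [Fintype.card_fin] at hcard
  omega

end SubwordComplex

theorem stmt13_general {B W : Type*} [Group W] {M : CoxeterMatrix B} (cs : CoxeterSystem M W)
    (Q : List B) (w : W)
    (compList : Finset (Fin Q.length) → List B)
    (hcomp : ∀ S, compList S = ((List.finRange Q.length).filter (fun i => i ∉ S)).map Q.get)
    (Face : Finset (Fin Q.length) → Prop)
    (hFace : ∀ S, Face S ↔ ∃ ω : List B, ω.Sublist (compList S) ∧
      cs.IsReduced ω ∧ cs.wordProd ω = w) :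
    (∀ S, (Face S ∧ ∀ S', Face S' → S ⊆ S' → S' = S) ↔
      (cs.IsReduced (compList S) ∧ cs.wordProd (compList S) = w)) ∧
    (∀ S, (Face S ∧ ∀ S', Face S' → S ⊆ S' → S' = S) →
      S.card = Q.length - cs.length w) := by
  obtain rfl : compList = complWord Q := funext hcomp
  obtain rfl : Face = IsSubwordFace cs Q w := funext fun S => propext (hFace S)
  have hmax (S) : (IsSubwordFace cs Q w S ∧ ∀ S', IsSubwordFace cs Q w S' → S ⊆ S' → S' = S) ↔
      Maximal (IsSubwordFace cs Q w) S := by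
    simp only [maximal_iff, eq_comm (a := S)]
  exact ⟨fun S => (hmax S).trans maximal_isSubwordFace_iff,
    fun S hS => card_of_maximal_isSubwordFace ((hmax S).mp hS)⟩

/-- Let `Q` be a word in the simple reflections of a Coxeter group `W` and
`w ∈ W`, and assume `Q` contains a reduced word for `w` as a subword.  Define the subword
complex `Δ(Q,w)`: a subset `S` of positions of `Q` is a face iff the complementary subword of
`Q` contains a reduced word for `w`.  Then `Δ(Q,w)` is pure: the facets (maximal faces) are
exactly those `S` whose complementary subword is itself a reduced word for `w`, and every
facet has cardinality `|Q| - ℓ(w)`. -/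
theorem stmt13 {B W : Type*} [Group W] {M : CoxeterMatrix B} (cs : CoxeterSystem M W)
    (Q : List B) (w : W)
    (compList : Finset (Fin Q.length) → List B)
    (hcomp : ∀ S, compList S = ((List.finRange Q.length).filter (fun i => i ∉ S)).map Q.get)
    (Face : Finset (Fin Q.length) → Prop)
    (hFace : ∀ S, Face S ↔ ∃ ω : List B, ω.Sublist (compList S) ∧
      cs.IsReduced ω ∧ cs.wordProd ω = w)
    (hQ : Face ∅) :
    (∀ S, (Face S ∧ ∀ S', Face S' → S ⊆ S' → S' = S) ↔
      (cs.IsReduced (compList S) ∧ cs.wordProd (compList S) = w)) ∧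
    (∀ S, (Face S ∧ ∀ S', Face S' → S ⊆ S' → S' = S) →
      S.card = Q.length - cs.length w) :=
  stmt13_general cs Q w compList hcomp Face hFace
end
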